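/- In the spectrum access game with group partitioning, the group utility η_i(A) = Σ_{j ∈ G_i} α_j(A) satisfies η_i(A) ≥ γ(A) - γ(A^{-i}) for every group i and every assignment A, where A^{-i} removes all users in group i; moreover Σ_{i=1}^l η_i(A) = γ(A). Hence the system (γ, {η_i}) is a valid utility system. -/

import Mathlib

open Finset

/-- Interference experienced by user `i` from the active users in `T`
(in the database-assisted spectrum access game). -/
noncomputable def interference (N : ℕ) (P : Fin N → ℝ) (d : Fin N → Fin N → ℝ)
    (lam : ℝ) (Np : Fin N → Finset (Fin N)) (a : Fin N → ℕ)
    (T : Finset (Fin N)) (i : Fin N) : ℝ :=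
  ∑ m ∈ Np i ∩ T, P m * d m i ^ (-lam) * (if a i = a m then 1 else 0)

/-- Private utility of user `i` when the set of active users is `T`. -/
noncomputable def privateUtility (N : ℕ) (P : Fin N → ℝ) (d : Fin N → Fin N → ℝ)
    (lam : ℝ) (Np : Fin N → Finset (Fin N)) (ω : Fin N → ℕ → ℝ) (a : Fin N → ℕ)
    (T : Finset (Fin N)) (i : Fin N) : ℝ :=
  -(interference N P d lam Np a T i) - ω i (a i)

/-- Social utility when the set of active users is `T`: the sum of the private
utilities of active users, with all terms involving inactive users removed. -/
noncomputable def socialUtility (N : ℕ) (P : Fin N → ℝ) (d : Fin N → Fin N → ℝ)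
    (lam : ℝ) (Np : Fin N → Finset (Fin N)) (ω : Fin N → ℕ → ℝ) (a : Fin N → ℕ)
    (T : Finset (Fin N)) : ℝ :=
  ∑ i ∈ T, privateUtility N P d lam Np ω a T i

section Monotonicity

variable {N : ℕ} {P : Fin N → ℝ} {d : Fin N → Fin N → ℝ} {lam : ℝ} {Np : Fin N → Finset (Fin N)}
  {ω : Fin N → ℕ → ℝ} {a : Fin N → ℕ}

theorem interference_mono (hP : ∀ m, 0 ≤ P m) (hd : ∀ m i, 0 ≤ d m i)
    {S T : Finset (Fin N)} (hST : S ⊆ T) (i : Fin N) :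
    interference N P d lam Np a S i ≤ interference N P d lam Np a T i := by
  refine sum_le_sum_of_subset_of_nonneg (inter_subset_inter_left hST) fun m _ _ => ?_
  have := Real.rpow_nonneg (hd m i) (-lam)
  have := hP m
  positivity

theorem privateUtility_anti (hP : ∀ m, 0 ≤ P m) (hd : ∀ m i, 0 ≤ d m i)
    {S T : Finset (Fin N)} (hST : S ⊆ T) (i : Fin N) :
    privateUtility N P d lam Np ω a T i ≤ privateUtility N P d lam Np ω a S i :=
  sub_le_sub_right (neg_le_neg (interference_mono hP hd hST i)) _

/-- Removing users only removes interference, so the users that stay are no worse off. -/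
theorem socialUtility_sub_le_sum_sdiff (hP : ∀ m, 0 ≤ P m) (hd : ∀ m i, 0 ≤ d m i)
    {S T : Finset (Fin N)} (hST : S ⊆ T) :
    socialUtility N P d lam Np ω a T - socialUtility N P d lam Np ω a S
      ≤ ∑ j ∈ T \ S, privateUtility N P d lam Np ω a T j := by
  have hstay : ∑ j ∈ S, privateUtility N P d lam Np ω a T j ≤ socialUtility N P d lam Np ω a S :=
    sum_le_sum fun j _ => privateUtility_anti hP hd hST j
  rw [socialUtility, ← sum_sdiff hST]
  linarith

end Monotonicity

theorem spectrum_group_system_valid_general (N : ℕ) (P : Fin N → ℝ) (d : Fin N → Fin N → ℝ)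
    (lam : ℝ) (Np : Fin N → Finset (Fin N)) (ω : Fin N → ℕ → ℝ) (a : Fin N → ℕ)
    (hP : ∀ m, 0 < P m) (hd : ∀ m i, 0 < d m i)
    (l : ℕ) (G : Fin l → Finset (Fin N))
    (hGdisj : ∀ i j : Fin l, i ≠ j → Disjoint (G i) (G j))
    (hGcover : Finset.univ.biUnion G = (Finset.univ : Finset (Fin N))) :
    (∀ i : Fin l,
      socialUtility N P d lam Np ω a Finset.univ
        - socialUtility N P d lam Np ω a (Finset.univ \ G i)
      ≤ ∑ j ∈ G i, privateUtility N P d lam Np ω a Finset.univ j) ∧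
    (∑ i : Fin l, ∑ j ∈ G i, privateUtility N P d lam Np ω a Finset.univ j
      = socialUtility N P d lam Np ω a Finset.univ) := by
  refine ⟨fun i => ?_, ?_⟩
  · simpa [sdiff_sdiff_right_self] using
      socialUtility_sub_le_sum_sdiff (ω := ω) (a := a) (lam := lam) (Np := Np)
        (fun m => (hP m).le) (fun m i => (hd m i).le) (sdiff_subset (s := univ) (t := G i))
  · rw [socialUtility, ← hGcover]
    exact (sum_biUnion fun x _ y _ hxy => hGdisj x y hxy).symm

/-- Validity of the group-partitioned spectrum access utility system: with users
partitioned into disjoint groups `G 1, …, G l` and group utilities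
`η i = ∑_{j ∈ G i} α j`, every group's utility is at least its marginal
contribution to the social utility, and the group utilities sum exactly to the
social utility. -/
theorem spectrum_group_system_valid (N : ℕ) (P : Fin N → ℝ) (d : Fin N → Fin N → ℝ)
    (lam : ℝ) (Np : Fin N → Finset (Fin N)) (ω : Fin N → ℕ → ℝ) (a : Fin N → ℕ)
    (hP : ∀ m, 0 < P m) (hd : ∀ m i, 0 < d m i) (hlam : 0 < lam)
    (hω : ∀ i c, 0 ≤ ω i c) (hNp : ∀ i, i ∉ Np i)
    (l : ℕ) (G : Fin l → Finset (Fin N))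
    (hGdisj : ∀ i j : Fin l, i ≠ j → Disjoint (G i) (G j))
    (hGcover : Finset.univ.biUnion G = (Finset.univ : Finset (Fin N))) :
    (∀ i : Fin l,
      socialUtility N P d lam Np ω a Finset.univ
        - socialUtility N P d lam Np ω a (Finset.univ \ G i)
      ≤ ∑ j ∈ G i, privateUtility N P d lam Np ω a Finset.univ j) ∧
    (∑ i : Fin l, ∑ j ∈ G i, privateUtility N P d lam Np ω a Finset.univ j
      = socialUtility N P d lam Np ω a Finset.univ) :=
  spectrum_group_system_valid_general N P d lam Np ω a hP hd l G hGdisj hGcover
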